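/- arXiv:2112.06053 — 3 statements merged into one kernel-verified Lean document; each statement's English description precedes it below -/
import Mathlib

section
/- Let (Ω, P) be a probability space, I a finite set of n ≥ 1 data points, and A ⊆ I a subset of m of them (the points drawn from cluster s, so u = m/n is the true importance weight). For each i ∈ I let X_i : Ω → {0,1} be a random variable indicating that point i is assigned to cluster s, and suppose P(X_i = 1) ≤ p for every i ∉ A, where 0 ≤ p ≤ 1. Let σ ≥ 0 and define the estimated importance weight U = max((1/n)·Σ_{i∈I} X_i, σ). Then E[U] ≤ (1 − p)·(m/n) + p + σ. -/
open MeasureTheory ProbabilityTheory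

/-- FedSoft Theorem 1 (bounded estimation errors): if each of the `n` data points
indexed by `ι` is assigned to cluster `s` with indicator `X i`, the points in `A`
(of which there are `m`) truly come from cluster `s`, and every point outside `A`
is misclassified into cluster `s` with probability at most `p`, then the smoothed
estimated importance weight `U = max ((1/n) ∑ i, X i) σ` satisfies
`E[U] ≤ (1 - p) * (m/n) + p + σ`. -/
theorem fedsoft_bounded_estimation_error
    {Ω : Type*} [MeasureSpace Ω] [IsProbabilityMeasure (ℙ : Measure Ω)]
    {ι : Type*} [Fintype ι] (n m : ℕ) (hn : 1 ≤ n) (hcard : Fintype.card ι = n)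
    (A : Finset ι) (hm : A.card = m)
    (X : ι → Ω → ℝ) (hXmeas : ∀ i, Measurable (X i))
    (hX01 : ∀ i (ω : Ω), X i ω = 0 ∨ X i ω = 1)
    (p σ : ℝ) (hp0 : 0 ≤ p) (hp1 : p ≤ 1) (hσ : 0 ≤ σ)
    (hmis : ∀ i ∉ A, (ℙ {ω : Ω | X i ω = 1}).toReal ≤ p) :
    ∫ ω, max ((1 / (n : ℝ)) * ∑ i, X i ω) σ ∂ℙ ≤ (1 - p) * (m / n) + p + σ := by

  classical
  have hn0 : (0:ℝ) < n := by positivity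
  have hXnn : ∀ i ω, 0 ≤ X i ω := by
    intro i ω; rcases hX01 i ω with h | h <;> simp [h]
  have hXle1 : ∀ i ω, X i ω ≤ 1 := by
    intro i ω; rcases hX01 i ω with h | h <;> simp [h]
  have hint : ∀ i, Integrable (X i) ℙ := by
    intro i
    refine (integrable_const (1:ℝ)).mono' (hXmeas i).aestronglyMeasurable ?_
    filter_upwards with ω
    rw [Real.norm_eq_abs, abs_of_nonneg (hXnn i ω)]
    exact hXle1 i ω
  have hEX : ∀ i, ∫ ω, X i ω ∂ℙ = (ℙ {ω : Ω | X i ω = 1}).toReal := by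
    intro i
    have hXeq : X i = Set.indicator {ω : Ω | X i ω = 1} (fun _ => (1:ℝ)) := by
      funext ω
      rcases hX01 i ω with h | h
      · rw [h, Set.indicator_of_notMem]; simp [Set.mem_setOf_eq, h]
      · rw [h, Set.indicator_of_mem]; exact h
    have hms : MeasurableSet {ω : Ω | X i ω = 1} := hXmeas i (measurableSet_singleton 1)
    conv_lhs => rw [hXeq]
    rw [integral_indicator_const _ hms]
    simp
    rfl
  -- bound each expectation
  have hEXle : ∀ i, ∫ ω, X i ω ∂ℙ ≤ if i ∈ A then 1 else p := by
    intro i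
    rw [hEX i]
    by_cases h : i ∈ A
    · simp only [h, if_true]
      have h1 := ENNReal.toReal_mono ENNReal.one_ne_top
        (prob_le_one (μ := ℙ) (s := {ω : Ω | X i ω = 1}))
      simpa using h1
    · simpa [h] using hmis i h
  have hmn : m ≤ n := by
    rw [← hm, ← hcard]; exact Finset.card_le_univ A
  -- the sum function
  set f : Ω → ℝ := fun ω => (1 / (n:ℝ)) * ∑ i, X i ω with hf
  have hintsum : Integrable (fun ω => ∑ i, X i ω) ℙ := integrable_finset_sum _ (fun i _ => hint i)
  have hintf : Integrable f ℙ := hintsum.const_mul _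
  have hintmax : Integrable (fun ω => max (f ω) σ) ℙ := by
    refine (integrable_const (max 1 σ)).mono' ?_ ?_
    · exact ((hintf.aestronglyMeasurable)).sup aestronglyMeasurable_const
    · filter_upwards with ω
      have h1 : 0 ≤ f ω := by
        apply mul_nonneg (by positivity)
        exact Finset.sum_nonneg (fun i _ => hXnn i ω)
      rw [Real.norm_eq_abs, abs_of_nonneg (le_max_of_le_right hσ)]
      have h2 : f ω ≤ 1 := by
        rw [hf]
        have : ∑ i, X i ω ≤ (n:ℝ) := by
          calc ∑ i, X i ω ≤ ∑ _i : ι, (1:ℝ) := Finset.sum_le_sum (fun i _ => hXle1 i ω)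
          _ = (n:ℝ) := by simp [hcard]
        calc (1/(n:ℝ)) * ∑ i, X i ω ≤ (1/(n:ℝ)) * n := by
              apply mul_le_mul_of_nonneg_left this (by positivity)
        _ = 1 := by field_simp
      exact max_le_max h2 le_rfl
  have step1 : ∫ ω, max (f ω) σ ∂ℙ ≤ ∫ ω, f ω ∂ℙ + σ := by
    have : ∫ ω, max (f ω) σ ∂ℙ ≤ ∫ ω, f ω + σ ∂ℙ := by
      apply integral_mono hintmax (hintf.add (integrable_const σ))
      intro ω
      have h1 : 0 ≤ f ω := by
        apply mul_nonneg (by positivity)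
        exact Finset.sum_nonneg (fun i _ => hXnn i ω)
      exact max_le (le_add_of_nonneg_right hσ) (le_add_of_nonneg_left h1)
    rwa [integral_add hintf (integrable_const σ), integral_const, probReal_univ, smul_eq_mul, one_mul] at this
  have step2 : ∫ ω, f ω ∂ℙ ≤ (1/(n:ℝ)) * ((m:ℝ) + ((n:ℝ) - m) * p) := by
    rw [hf]
    simp only
    rw [integral_const_mul, integral_finset_sum _ (fun i _ => hint i)]
    apply mul_le_mul_of_nonneg_left _ (by positivity)
    calc ∑ i, ∫ ω, X i ω ∂ℙ ≤ ∑ i, if i ∈ A then (1:ℝ) else p :=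
          Finset.sum_le_sum (fun i _ => hEXle i)
    _ = (m:ℝ) + ((n:ℝ) - m) * p := by
        have h1 : Finset.univ.filter (fun i => i ∈ A) = A := by ext i; simp
        have h2 : (Finset.univ.filter (fun i => ¬ i ∈ A)).card = n - m := by
          have hc : Finset.univ.filter (fun i => ¬ i ∈ A) = Aᶜ := by ext i; simp
          rw [hc, Finset.card_compl, hm, hcard]
        rw [Finset.sum_ite, Finset.sum_const, Finset.sum_const, h1, h2, hm]
        rw [nsmul_eq_mul, nsmul_eq_mul, Nat.cast_sub hmn]
        ring
  calc ∫ ω, max (f ω) σ ∂ℙ ≤ (1/(n:ℝ)) * ((m:ℝ) + ((n:ℝ) - m) * p) + σ := by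
        exact le_trans step1 (by linarith)
  _ = (1 - p) * (m / n) + p + σ := by field_simp; ring
end

section
/- Let E be a finite-dimensional real inner product space, S ≥ 1, and u_1,…,u_S ≥ 0 with Σ_{s'=1}^S u_{s'} = 1. Let h_1,…,h_S : E → ℝ be differentiable functions, each μ-strongly convex and L-smooth with 0 < μ ≤ L, and each attaining its minimum; set h = Σ_{s'} u_{s'} h_{s'}. Fix an index s with u_s > 0, a point c_s ∈ E, and let w_s* be the unique minimizer of h_s. Suppose w ∈ E satisfies (i) ‖∇h(w)‖ ≤ γ₀‖∇h_s(c_s)‖ and (ii) Σ_{s'=1}^S u_{s'}‖∇h_{s'}(w_s*)‖² ≤ β‖∇h_s(c_s)‖², for constants γ₀ ≥ 0 and β ≥ 0. Then ‖∇h_s(w)‖ ≤ (γ/√(u_s))·‖∇h_s(c_s)‖, where γ = √((γ₀² + β)·L/μ). -/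
open scoped RealInnerProductSpace

section helpers
variable {E : Type*} [NormedAddCommGroup E] [InnerProductSpace ℝ E] [CompleteSpace E]

/-- completing-the-square bound -/
lemma fedsoft_quad (μ : ℝ) (hμ : 0 < μ) (g d : E) :
    -(‖g‖ ^ 2 / (2 * μ)) ≤ ⟪g, d⟫ + μ / 2 * ‖d‖ ^ 2 := by
  have h0 : (0:ℝ) ≤ μ / 2 * ‖d + μ⁻¹ • g‖ ^ 2 := by positivity
  have hexp := norm_add_sq_real d (μ⁻¹ • g)
  rw [real_inner_smul_right, norm_smul, Real.norm_eq_abs, abs_of_pos (inv_pos.2 hμ)] at hexp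
  have hcomm : ⟪d, g⟫ = ⟪g, d⟫ := real_inner_comm g d
  have hkey : ⟪g, d⟫ + μ / 2 * ‖d‖ ^ 2 + ‖g‖ ^ 2 / (2 * μ) = μ / 2 * ‖d + μ⁻¹ • g‖ ^ 2 := by
    rw [hexp, hcomm]; field_simp; ring
  linarith

/-- derivative of `f` along a line -/
lemma fedsoft_line_deriv (f : E → ℝ) (hdiff : Differentiable ℝ f) (x v : E) (t : ℝ) :
    HasDerivAt (fun t : ℝ => f (x + t • v)) ⟪gradient f (x + t • v), v⟫ t := by
  have h1 : HasDerivAt (fun t : ℝ => x + t • v) v t := by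
    simpa using ((hasDerivAt_id t).smul_const v).const_add x
  have h2 := (hdiff (x + t • v)).hasGradientAt.hasFDerivAt
  simpa [InnerProductSpace.toDual_apply_apply, Function.comp_def] using h2.comp_hasDerivAt t h1

/-- descent lemma for functions with Lipschitz gradient -/
lemma fedsoft_descent (f : E → ℝ) (L : ℝ) (hdiff : Differentiable ℝ f)
    (hsm : ∀ x y : E, ‖gradient f x - gradient f y‖ ≤ L * ‖x - y‖) (x y : E) :
    f y ≤ f x + ⟪gradient f x, y - x⟫ + L / 2 * ‖y - x‖ ^ 2 := by
  set v := y - x with hv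
  set c1 : ℝ := ⟪gradient f x, v⟫ with hc1
  set c2 : ℝ := L / 2 * ‖v‖ ^ 2 with hc2
  set φ : ℝ → ℝ := fun t => f x + t * c1 + t ^ 2 * c2 - f (x + t • v) with hφdef
  have hφ : ∀ t : ℝ, HasDerivAt φ (c1 + 2 * t * c2 - ⟪gradient f (x + t • v), v⟫) t := by
    intro t
    have hA : HasDerivAt (fun t : ℝ => f x + t * c1 + t ^ 2 * c2) (c1 + 2 * t * c2) t := by
      have h1 : HasDerivAt (fun t : ℝ => t * c1) c1 t := by
        simpa using (hasDerivAt_id t).mul_const c1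
      have h2 : HasDerivAt (fun t : ℝ => t ^ 2 * c2) (2 * t * c2) t := by
        simpa [pow_one] using (hasDerivAt_pow 2 t).mul_const c2
      simpa using (h1.const_add (f x)).fun_add h2
    exact hA.sub (fedsoft_line_deriv f hdiff x v t)
  have hmono : MonotoneOn φ (Set.Icc (0:ℝ) 1) := by
    apply monotoneOn_of_deriv_nonneg (convex_Icc 0 1)
    · have hdφ : Differentiable ℝ φ := fun t => (hφ t).differentiableAt
      exact hdφ.continuous.continuousOn
    · have hdφ : Differentiable ℝ φ := fun t => (hφ t).differentiableAt
      exact hdφ.differentiableOn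
    · intro t ht
      rw [(hφ t).deriv]
      rw [interior_Icc] at ht
      have ht0 : 0 ≤ t := ht.1.le
      have hle : ⟪gradient f (x + t • v) - gradient f x, v⟫ ≤
          ‖gradient f (x + t • v) - gradient f x‖ * ‖v‖ := real_inner_le_norm _ _
      have hlip : ‖gradient f (x + t • v) - gradient f x‖ ≤ L * (t * ‖v‖) := by
        simpa [norm_smul, Real.norm_eq_abs, abs_of_nonneg ht0] using hsm (x + t • v) x
      rw [inner_sub_left] at hle
      have hvn : (0:ℝ) ≤ ‖v‖ := norm_nonneg _
      nlinarith [mul_le_mul_of_nonneg_right hlip hvn]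
  have h01 := hmono (Set.mem_Icc.2 ⟨le_refl 0, zero_le_one⟩) (Set.mem_Icc.2 ⟨zero_le_one, le_refl 1⟩) zero_le_one
  have hxy : x + (1:ℝ) • v = y := by rw [one_smul, hv]; abel
  simp only [hφdef, zero_smul, add_zero, zero_mul, one_mul, one_pow, hxy,
    ne_eq, OfNat.ofNat_ne_zero, not_false_eq_true, zero_pow, zero_mul] at h01
  linarith

/-- squared gradient bound for smooth functions with a minimizer -/
lemma fedsoft_grad_sq_le (f : E → ℝ) (L : ℝ) (hL : 0 < L) (hdiff : Differentiable ℝ f)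
    (hsm : ∀ x y : E, ‖gradient f x - gradient f y‖ ≤ L * ‖x - y‖)
    {xm : E} (hxm : ∀ y : E, f xm ≤ f y) (x : E) :
    ‖gradient f x‖ ^ 2 ≤ 2 * L * (f x - f xm) := by
  have hd := fedsoft_descent f L hdiff hsm x (x - L⁻¹ • gradient f x)
  have heq : x - L⁻¹ • gradient f x - x = -(L⁻¹ • gradient f x) := by abel
  rw [heq, inner_neg_right, real_inner_smul_right, real_inner_self_eq_norm_sq,
    norm_neg, norm_smul, Real.norm_eq_abs, abs_of_pos (inv_pos.2 hL)] at hd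
  have hmin := hxm (x - L⁻¹ • gradient f x)
  have heq2 : f x + -(L⁻¹ * ‖gradient f x‖ ^ 2) + L / 2 * (L⁻¹ * ‖gradient f x‖) ^ 2
      = f x - ‖gradient f x‖ ^ 2 / (2 * L) := by field_simp; ring
  rw [heq2] at hd
  have h3 : ‖gradient f x‖ ^ 2 / (2 * L) ≤ f x - f xm := by linarith
  calc ‖gradient f x‖ ^ 2 ≤ (f x - f xm) * (2 * L) :=
        (div_le_iff₀ (by positivity : (0:ℝ) < 2 * L)).1 h3
    _ = 2 * L * (f x - f xm) := by ring

end helpers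


/-- FedSoft Theorem 2 (inexact solutions of sub-problems): if `w` is a `γ₀`-inexact
solution of the proximal objective `H = ∑ s', u s' • h s'`, the sub-problems `h s'`
are `μ`-strongly convex and `L`-smooth, and they are `β`-similar at the minimizer
`wstar` of `h s`, then `‖∇ (h s) w‖ ≤ (γ / √(u s)) ‖∇ (h s) cs‖` with
`γ = √((γ₀² + β) L / μ)`. -/
theorem fedsoft_sub_inexact
    {E : Type*} [NormedAddCommGroup E] [InnerProductSpace ℝ E] [FiniteDimensional ℝ E]
    (S : ℕ) (hS : 1 ≤ S)
    (u : Fin S → ℝ) (hu : ∀ s', 0 ≤ u s') (husum : ∑ s', u s' = 1)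
    (h : Fin S → E → ℝ) (μ L : ℝ) (hμ : 0 < μ) (hμL : μ ≤ L)
    (hdiff : ∀ s', Differentiable ℝ (h s'))
    (hsc : ∀ s' (x y : E),
      h s' x + ⟪gradient (h s') x, y - x⟫ + μ / 2 * ‖y - x‖ ^ 2 ≤ h s' y)
    (hsm : ∀ s' (x y : E), ‖gradient (h s') x - gradient (h s') y‖ ≤ L * ‖x - y‖)
    (hminall : ∀ s', ∃ x : E, ∀ y : E, h s' x ≤ h s' y)
    (H : E → ℝ) (hH : H = fun x => ∑ s', u s' * h s' x)
    (s : Fin S) (hus : 0 < u s) (cs : E)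
    (wstar : E) (hwstar : ∀ y : E, h s wstar ≤ h s y)
    (w : E) (γ₀ β : ℝ) (hγ₀ : 0 ≤ γ₀) (hβ : 0 ≤ β)
    (hinexact : ‖gradient H w‖ ≤ γ₀ * ‖gradient (h s) cs‖)
    (hsimilar : ∑ s', u s' * ‖gradient (h s') wstar‖ ^ 2 ≤ β * ‖gradient (h s) cs‖ ^ 2) :
    ‖gradient (h s) w‖ ≤
      Real.sqrt ((γ₀ ^ 2 + β) * L / μ) / Real.sqrt (u s) * ‖gradient (h s) cs‖ := by
  classical
  have hL : 0 < L := lt_of_lt_of_le hμ hμL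
  set C := ‖gradient (h s) cs‖ with hC
  have hC0 : 0 ≤ C := norm_nonneg _
  choose xm hxm using hminall
  -- gradient of H
  have hgradHval : gradient H w = ∑ s', u s' • gradient (h s') w := by
    have hf : HasFDerivAt (fun x => ∑ s', u s' * h s' x)
        (∑ s', u s' • (InnerProductSpace.toDual ℝ E (gradient (h s') w))) w := by
      apply HasFDerivAt.fun_sum
      intro i _
      exact ((hdiff i w).hasGradientAt.hasFDerivAt).const_mul (u i)
    have hgr : HasGradientAt H (∑ s', u s' • gradient (h s') w) w := by
      rw [hH, hasGradientAt_iff_hasFDerivAt, map_sum]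
      simpa [map_smul] using hf
    exact hgr.gradient
  -- strong convexity of H
  have hHsc : ∀ y : E, H w + ⟪gradient H w, y - w⟫ + μ / 2 * ‖y - w‖ ^ 2 ≤ H y := by
    intro y
    have hsum := Finset.sum_le_sum
      (fun s' (_ : s' ∈ Finset.univ) => mul_le_mul_of_nonneg_left (hsc s' w y) (hu s'))
    have hL1 : ∑ s', u s' * (h s' w + ⟪gradient (h s') w, y - w⟫ + μ / 2 * ‖y - w‖ ^ 2)
        = (∑ s', u s' * h s' w) + (∑ s', ⟪u s' • gradient (h s') w, y - w⟫)
          + μ / 2 * ‖y - w‖ ^ 2 := by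
      simp only [mul_add, real_inner_smul_left]
      rw [Finset.sum_add_distrib, Finset.sum_add_distrib, ← Finset.sum_mul, husum, one_mul]
    rw [hL1] at hsum
    rw [hgradHval, sum_inner, hH]
    simpa using hsum
  -- PL on H at w with y = wstar
  have hHw : H w ≤ H wstar + ‖gradient H w‖ ^ 2 / (2 * μ) := by
    have h1 := hHsc wstar
    have hq := fedsoft_quad μ hμ (gradient H w) (wstar - w)
    linarith
  -- per-cluster PL at wstar
  have hpc : ∀ s', h s' wstar - h s' (xm s') ≤ ‖gradient (h s') wstar‖ ^ 2 / (2 * μ) := by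
    intro s'
    have h1 := hsc s' wstar (xm s')
    have hq := fedsoft_quad μ hμ (gradient (h s') wstar) (xm s' - wstar)
    linarith
  -- H wstar bound
  have hHwst : H wstar ≤ (∑ s', u s' * h s' (xm s')) + β * C ^ 2 / (2 * μ) := by
    rw [hH]
    have h1 : ∑ s', u s' * h s' wstar
        ≤ ∑ s', (u s' * h s' (xm s') + u s' * (‖gradient (h s') wstar‖ ^ 2 / (2 * μ))) :=
      Finset.sum_le_sum (fun s' _ => by nlinarith [hpc s', hu s'])
    rw [Finset.sum_add_distrib] at h1
    have h2 : ∑ s', u s' * (‖gradient (h s') wstar‖ ^ 2 / (2 * μ))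
        = (∑ s', u s' * ‖gradient (h s') wstar‖ ^ 2) / (2 * μ) := by
      rw [Finset.sum_div]
      exact Finset.sum_congr rfl (fun s' _ => (mul_div_assoc _ _ _).symm)
    have h3 : (∑ s', u s' * ‖gradient (h s') wstar‖ ^ 2) / (2 * μ) ≤ β * C ^ 2 / (2 * μ) := by
      gcongr
    rw [h2] at h1
    linarith
  -- smoothness bound on each gradient at w
  have hgw : ∀ s', ‖gradient (h s') w‖ ^ 2 ≤ 2 * L * (h s' w - h s' (xm s')) :=
    fun s' => fedsoft_grad_sq_le (h s') L hL (hdiff s') (hsm s') (hxm s') w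
  have hsum2 : u s * ‖gradient (h s) w‖ ^ 2
      ≤ 2 * L * (H w - ∑ s', u s' * h s' (xm s')) := by
    have hA : u s * ‖gradient (h s) w‖ ^ 2 ≤ ∑ s', u s' * ‖gradient (h s') w‖ ^ 2 :=
      Finset.single_le_sum (f := fun s' => u s' * ‖gradient (h s') w‖ ^ 2)
        (fun s' _ => mul_nonneg (hu s') (sq_nonneg _)) (Finset.mem_univ s)
    have hB : ∑ s', u s' * ‖gradient (h s') w‖ ^ 2
        ≤ ∑ s', u s' * (2 * L * (h s' w - h s' (xm s'))) :=
      Finset.sum_le_sum (fun s' _ => mul_le_mul_of_nonneg_left (hgw s') (hu s'))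
    have hC2 : ∑ s', u s' * (2 * L * (h s' w - h s' (xm s')))
        = 2 * L * ((∑ s', u s' * h s' w) - ∑ s', u s' * h s' (xm s')) := by
      rw [mul_sub, Finset.mul_sum, Finset.mul_sum, ← Finset.sum_sub_distrib]
      exact Finset.sum_congr rfl (fun s' _ => by ring)
    have hHw' : H w = ∑ s', u s' * h s' w := by rw [hH]
    rw [hC2, ← hHw'] at hB
    linarith
  -- final numeric bound
  have hfinal : u s * ‖gradient (h s) w‖ ^ 2 ≤ (γ₀ ^ 2 + β) * L / μ * C ^ 2 := by
    have h1 : ‖gradient H w‖ ^ 2 ≤ γ₀ ^ 2 * C ^ 2 := by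
      nlinarith [norm_nonneg (gradient H w)]
    have h1' : ‖gradient H w‖ ^ 2 / (2 * μ) ≤ γ₀ ^ 2 * C ^ 2 / (2 * μ) := by gcongr
    have h2 : H w - (∑ s', u s' * h s' (xm s')) ≤ (γ₀ ^ 2 + β) * C ^ 2 / (2 * μ) := by
      have hsplit : (γ₀ ^ 2 + β) * C ^ 2 / (2 * μ)
          = γ₀ ^ 2 * C ^ 2 / (2 * μ) + β * C ^ 2 / (2 * μ) := by ring
      linarith
    calc u s * ‖gradient (h s) w‖ ^ 2
        ≤ 2 * L * (H w - ∑ s', u s' * h s' (xm s')) := hsum2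
      _ ≤ 2 * L * ((γ₀ ^ 2 + β) * C ^ 2 / (2 * μ)) := by
          exact mul_le_mul_of_nonneg_left h2 (by positivity)
      _ = (γ₀ ^ 2 + β) * L / μ * C ^ 2 := by field_simp
  -- conclude via square roots
  have hA0 : (0:ℝ) ≤ (γ₀ ^ 2 + β) * L / μ := by positivity
  have hrhs : Real.sqrt ((γ₀ ^ 2 + β) * L / μ) / Real.sqrt (u s) * C
      = Real.sqrt ((γ₀ ^ 2 + β) * L / μ / (u s) * C ^ 2) := by
    rw [Real.sqrt_mul (by positivity) (C ^ 2), Real.sqrt_sq hC0, Real.sqrt_div hA0]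
  rw [hrhs, ← Real.sqrt_sq (norm_nonneg (gradient (h s) w))]
  apply Real.sqrt_le_sqrt
  rw [show (γ₀ ^ 2 + β) * L / μ / (u s) * C ^ 2 = ((γ₀ ^ 2 + β) * L / μ * C ^ 2) / (u s) by ring]
  rw [le_div_iff₀ hus]
  nlinarith [hfinal]
end

section
/- Let E be a finite-dimensional real inner product space and S ≥ 2. For s = 1,…,S let F_s : E → ℝ be differentiable, μ_F-strongly convex and L_F-smooth with 0 < μ_F ≤ L_F, with unique minimizer c_s*. Let δ, Δ > 0 satisfy δ ≤ ‖c_s* − c_{s'}*‖ ≤ Δ for all s ≠ s'. Let c_1,…,c_S ∈ E satisfy ‖c_s − c_s*‖ ≤ (1/2 − α₀)·√(μ_F/L_F)·δ for every s, where 1/4 ≤ α₀ ≤ 1/2. Let u_1,…,u_S ≥ 0 with Σ_s u_s = 1, and let s' be an index maximizing u_s (so that u_{s'} ≥ 1/S). Let h_{s'} : E → ℝ be differentiable and μ_λ-strongly convex with μ_λ ≥ μ_F and ∇h_{s'}(c_{s'}) = ∇F_{s'}(c_{s'}), and suppose w ∈ E satisfies ‖∇h_{s'}(w)‖ ≤ (γ/u_{s'})·‖∇F_{s'}(c_{s'})‖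 for some γ ≥ 0. Then for every s = 1,…,S: ‖w − c_s‖ ≤ rΔ, where r = ((γS + 1)/4)·√(L_F/μ_F) + (1/2)·√(μ_F/L_F) + 1. -/
open scoped RealInnerProductSpace

lemma gradient_eq_zero_of_min {E : Type*} [NormedAddCommGroup E] [InnerProductSpace ℝ E]
    [CompleteSpace E] {f : E → ℝ} {a : E} (h : ∀ y, f a ≤ f y) : gradient f a = 0 := by
  have hmin : IsLocalMin f a := Filter.Eventually.of_forall h
  unfold gradient
  rw [hmin.fderiv_eq_zero, map_zero]

lemma strong_mono {E : Type*} [NormedAddCommGroup E] [InnerProductSpace ℝ E]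
    [CompleteSpace E] {f : E → ℝ} {μ : ℝ} (hμ : 0 ≤ μ)
    (hsc : ∀ x y : E, f x + ⟪gradient f x, y - x⟫ + μ / 2 * ‖y - x‖ ^ 2 ≤ f y)
    (x y : E) : μ * ‖x - y‖ ≤ ‖gradient f x - gradient f y‖ := by
  have h1 := hsc x y
  have h2 := hsc y x
  have hn : ‖y - x‖ = ‖x - y‖ := norm_sub_rev _ _
  have hip : μ * ‖x - y‖ ^ 2 ≤ ⟪gradient f x - gradient f y, x - y⟫ := by
    rw [inner_sub_left]
    have e1 : ⟪gradient f x, x - y⟫ = -⟪gradient f x, y - x⟫ := by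
      rw [show x - y = -(y - x) by abel, inner_neg_right]
    rw [hn] at h1
    rw [e1]
    linarith
  have hcs : ⟪gradient f x - gradient f y, x - y⟫ ≤ ‖gradient f x - gradient f y‖ * ‖x - y‖ :=
    real_inner_le_norm _ _
  rcases eq_or_lt_of_le (norm_nonneg (x - y)) with h0 | h0
  · rw [← h0, mul_zero]; exact norm_nonneg _
  · nlinarith

/-- FedSoft Theorem 3 (divergence of local model to centers): under the
bounded-initial-error assumption on the centers `c s` relative to the optimal cluster
models `cstar s` (whose pairwise distances lie in `[δ, Δ]`), if `s'` maximizes the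
importance weights `u` and the inexact local solution `w` satisfies the gradient bound
from Theorem 2 for the `muLam`-strongly convex sub-problem `hsub`, then
`‖w - c s‖ ≤ r Δ` for every `s`, with
`r = ((γS + 1)/4)√(L_F/μ_F) + (1/2)√(μ_F/L_F) + 1`. -/
theorem fedsoft_divergence_local_to_centers
    {E : Type*} [NormedAddCommGroup E] [InnerProductSpace ℝ E] [FiniteDimensional ℝ E]
    (S : ℕ) (hS : 2 ≤ S)
    (F : Fin S → E → ℝ) (μF LF : ℝ) (hμF : 0 < μF) (hμL : μF ≤ LF)
    (hdiff : ∀ s, Differentiable ℝ (F s))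
    (hsc : ∀ s (x y : E),
      F s x + ⟪gradient (F s) x, y - x⟫ + μF / 2 * ‖y - x‖ ^ 2 ≤ F s y)
    (hsm : ∀ s (x y : E), ‖gradient (F s) x - gradient (F s) y‖ ≤ LF * ‖x - y‖)
    (cstar : Fin S → E) (hcstar : ∀ s (y : E), F s (cstar s) ≤ F s y)
    (δ Δ : ℝ) (hδ : 0 < δ) (hΔ : 0 < Δ)
    (hsep : ∀ s s', s ≠ s' → δ ≤ ‖cstar s - cstar s'‖ ∧ ‖cstar s - cstar s'‖ ≤ Δ)
    (α₀ : ℝ) (hα₀l : 1 / 4 ≤ α₀) (hα₀u : α₀ ≤ 1 / 2)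
    (c : Fin S → E)
    (hinit : ∀ s, ‖c s - cstar s‖ ≤ (1 / 2 - α₀) * Real.sqrt (μF / LF) * δ)
    (u : Fin S → ℝ) (hu : ∀ s, 0 ≤ u s) (husum : ∑ s, u s = 1)
    (s' : Fin S) (hmax : ∀ s, u s ≤ u s')
    (hsub : E → ℝ) (muLam : ℝ) (hmuLam : μF ≤ muLam)
    (hsubdiff : Differentiable ℝ hsub)
    (hsubsc : ∀ x y : E,
      hsub x + ⟪gradient hsub x, y - x⟫ + muLam / 2 * ‖y - x‖ ^ 2 ≤ hsub y)
    (hsubgrad : gradient hsub (c s') = gradient (F s') (c s'))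
    (w : E) (γ : ℝ) (hγ : 0 ≤ γ)
    (hw : ‖gradient hsub w‖ ≤ γ / u s' * ‖gradient (F s') (c s')‖) :
    ∀ s, ‖w - c s‖ ≤
      ((γ * S + 1) / 4 * Real.sqrt (LF / μF) + 1 / 2 * Real.sqrt (μF / LF) + 1) * Δ := by
  intro s
  have hLF : 0 < LF := lt_of_lt_of_le hμF hμL
  have hmuLam0 : 0 < muLam := lt_of_lt_of_le hμF hmuLam
  have hsa0 : 0 ≤ Real.sqrt (μF / LF) := Real.sqrt_nonneg _
  have hsb0 : 0 ≤ Real.sqrt (LF / μF) := Real.sqrt_nonneg _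
  have hγS : 0 ≤ γ * (S : ℝ) := mul_nonneg hγ (Nat.cast_nonneg S)
  -- key sqrt identity
  have hkey : LF * Real.sqrt (μF / LF) = μF * Real.sqrt (LF / μF) := by
    have e1 : LF * Real.sqrt (μF / LF) = Real.sqrt (LF ^ 2 * (μF / LF)) := by
      rw [Real.sqrt_mul (sq_nonneg LF), Real.sqrt_sq hLF.le]
    have e2 : μF * Real.sqrt (LF / μF) = Real.sqrt (μF ^ 2 * (LF / μF)) := by
      rw [Real.sqrt_mul (sq_nonneg μF), Real.sqrt_sq hμF.le]
    rw [e1, e2]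
    congr 1
    field_simp
  -- gradient of F at minimizer is zero
  have grad0 : ∀ t, gradient (F t) (cstar t) = 0 :=
    fun t => gradient_eq_zero_of_min (hcstar t)
  -- u s' ≥ 1/S
  have hS2 : (2 : ℝ) ≤ (S : ℝ) := by exact_mod_cast hS
  have hus1 : (1 : ℝ) ≤ (S : ℝ) * u s' := by
    calc (1 : ℝ) = ∑ t, u t := husum.symm
      _ ≤ ∑ _t : Fin S, u s' := Finset.sum_le_sum (fun i _ => hmax i)
      _ = (S : ℝ) * u s' := by
          simp [Finset.sum_const, Finset.card_univ, nsmul_eq_mul]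
  have hus0 : 0 < u s' := by nlinarith
  have hgam : γ / u s' ≤ γ * (S : ℝ) := by
    rw [div_le_iff₀ hus0]
    nlinarith
  -- initial error bound
  have hinit4 : ∀ t, ‖c t - cstar t‖ ≤ Real.sqrt (μF / LF) * δ / 4 := by
    intro t
    have h := hinit t
    nlinarith [mul_nonneg hsa0 hδ.le]
  -- gradient norm bound at c s'
  have hG : ‖gradient (F s') (c s')‖ ≤ LF * (Real.sqrt (μF / LF) * δ / 4) := by
    have e : gradient (F s') (c s')
        = gradient (F s') (c s') - gradient (F s') (cstar s') := by
      rw [grad0 s', sub_zero]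
    calc ‖gradient (F s') (c s')‖
        = ‖gradient (F s') (c s') - gradient (F s') (cstar s')‖ := by rw [← e]
      _ ≤ LF * ‖c s' - cstar s'‖ := hsm s' _ _
      _ ≤ LF * (Real.sqrt (μF / LF) * δ / 4) :=
          mul_le_mul_of_nonneg_left (hinit4 s') hLF.le
  have hGn : 0 ≤ ‖gradient (F s') (c s')‖ := norm_nonneg _
  -- bound ‖w - c s'‖
  have hm := strong_mono hmuLam0.le hsubsc w (c s')
  have step : muLam * ‖w - c s'‖ ≤ (γ * S + 1) * ‖gradient (F s') (c s')‖ := by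
    have t1 : ‖gradient hsub w - gradient hsub (c s')‖
        ≤ ‖gradient hsub w‖ + ‖gradient hsub (c s')‖ := norm_sub_le _ _
    rw [hsubgrad] at t1 hm
    have t2 : ‖gradient hsub w‖ ≤ γ * (S : ℝ) * ‖gradient (F s') (c s')‖ :=
      hw.trans (mul_le_mul_of_nonneg_right hgam hGn)
    nlinarith
  have coeff0 : 0 ≤ (γ * S + 1) / 4 * Real.sqrt (LF / μF) * δ :=
    mul_nonneg (mul_nonneg (by linarith) hsb0) hδ.le
  have step2 : muLam * ‖w - c s'‖
      ≤ muLam * ((γ * S + 1) / 4 * Real.sqrt (LF / μF) * δ) := by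
    have t3 : (γ * S + 1) * ‖gradient (F s') (c s')‖
        ≤ (γ * S + 1) * (LF * (Real.sqrt (μF / LF) * δ / 4)) :=
      mul_le_mul_of_nonneg_left hG (by linarith)
    have e3 : (γ * S + 1) * (LF * (Real.sqrt (μF / LF) * δ / 4))
        = μF * ((γ * S + 1) / 4 * Real.sqrt (LF / μF) * δ) := by
      calc (γ * S + 1) * (LF * (Real.sqrt (μF / LF) * δ / 4))
          = (LF * Real.sqrt (μF / LF)) * ((γ * S + 1) * δ / 4) := by ring
        _ = (μF * Real.sqrt (LF / μF)) * ((γ * S + 1) * δ / 4) := by rw [hkey]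
        _ = μF * ((γ * S + 1) / 4 * Real.sqrt (LF / μF) * δ) := by ring
    have t4 : μF * ((γ * S + 1) / 4 * Real.sqrt (LF / μF) * δ)
        ≤ muLam * ((γ * S + 1) / 4 * Real.sqrt (LF / μF) * δ) :=
      mul_le_mul_of_nonneg_right hmuLam coeff0
    linarith
  have hwcs : ‖w - c s'‖ ≤ (γ * S + 1) / 4 * Real.sqrt (LF / μF) * δ :=
    le_of_mul_le_mul_left step2 hmuLam0
  -- triangle inequality
  have tri : ‖w - c s‖ ≤ ‖w - c s'‖ + ‖c s' - cstar s'‖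
      + ‖cstar s' - cstar s‖ + ‖cstar s - c s‖ := by
    have e : w - c s = ((w - c s') + (c s' - cstar s'))
        + ((cstar s' - cstar s) + (cstar s - c s)) := by abel
    calc ‖w - c s‖
        = ‖((w - c s') + (c s' - cstar s')) + ((cstar s' - cstar s) + (cstar s - c s))‖ := by
          rw [← e]
      _ ≤ ‖(w - c s') + (c s' - cstar s')‖ + ‖(cstar s' - cstar s) + (cstar s - c s)‖ :=
          norm_add_le _ _
      _ ≤ (‖w - c s'‖ + ‖c s' - cstar s'‖) + (‖cstar s' - cstar s‖ + ‖cstar s - c s‖) :=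
          add_le_add (norm_add_le _ _) (norm_add_le _ _)
      _ = _ := by ring
  have hsep' : ‖cstar s' - cstar s‖ ≤ Δ := by
    by_cases h : s' = s
    · simp [h, hΔ.le]
    · exact (hsep s' s h).2
  have hδΔ : δ ≤ Δ := by
    have h01 : (⟨0, by omega⟩ : Fin S) ≠ ⟨1, by omega⟩ := by simp [Fin.ext_iff]
    have h2 := hsep _ _ h01
    linarith [h2.1, h2.2]
  have hcs' : ‖c s' - cstar s'‖ ≤ Real.sqrt (μF / LF) * δ / 4 := hinit4 s'
  have hcs : ‖cstar s - c s‖ ≤ Real.sqrt (μF / LF) * δ / 4 := by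
    rw [norm_sub_rev]; exact hinit4 s
  have m1 : (γ * S + 1) / 4 * Real.sqrt (LF / μF) * δ
      ≤ (γ * S + 1) / 4 * Real.sqrt (LF / μF) * Δ :=
    mul_le_mul_of_nonneg_left hδΔ (mul_nonneg (by linarith) hsb0)
  have m2 : Real.sqrt (μF / LF) * δ ≤ Real.sqrt (μF / LF) * Δ :=
    mul_le_mul_of_nonneg_left hδΔ hsa0
  have expand : ((γ * S + 1) / 4 * Real.sqrt (LF / μF) + 1 / 2 * Real.sqrt (μF / LF) + 1) * Δ
      = (γ * S + 1) / 4 * Real.sqrt (LF / μF) * Δ + 1 / 2 * (Real.sqrt (μF / LF) * Δ) + Δ := by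
    ring
  linarith
end
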